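/- For any Leray solution z = (u,w) of the incompressible micropolar equations on ℝⁿ (n = 2 or 3) with initial data (u₀,w₀) ∈ L²_σ(ℝⁿ)×L²(ℝⁿ), one has ‖Dz(·,t)‖_{L²(ℝⁿ)} ≤ γ^{−1/2} ‖(u₀,w₀)‖_{L²(ℝⁿ)} t^{−1/2} for all t > 2t_**, where t_** ≥ t_* is the monotonicity time of ‖Dz(·,t)‖_{L²(ℝⁿ)} (i.e., a time after which ‖Dz(·,t)‖_{L²} is monotonically decreasing, satisfying t_** ≤ 0.005·γ^{−5}‖(u₀,w₀)‖⁴_{L²} when n = 3, and ‖(u,w)(·,t_**)‖_{L²(ℝ²)} ≤ 2γ when n = 2). -/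

import Mathlib

/-!
Common setting: Leray solutions of the incompressible micropolar equations on ℝⁿ
(n = 2 or 3).  In dimension 2 the micro-rotation field is identified with the
3-component field (0, 0, w), so that the equations can be written uniformly:
partial derivatives and velocity components indexed by `Fin 3` that do not exist in
dimension `n` are taken to be zero.
-/

noncomputable section

open MeasureTheory Real Filter Topology RealInnerProductSpace

namespace Micropolar

/-- `n`-dimensional Euclidean space. -/
abbrev Spc (n : ℕ) : Type := EuclideanSpace ℝ (Fin n)

/-- Partial derivative of a scalar field in the `i`-th coordinate direction. -/
def pd {n : ℕ} (i : Fin n) (f : Spc n → ℝ) (x : Spc n) : ℝ :=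
  fderiv ℝ f x (EuclideanSpace.single i 1)

/-- Iterated partial derivatives along a list of coordinate directions. -/
def pdIter {n : ℕ} : List (Fin n) → (Spc n → ℝ) → Spc n → ℝ
  | [], f => f
  | i :: l, f => pd i (pdIter l f)

/-- Squared spatial `L²`-norm of the collection of all `m`-th order derivatives of a
finite family of scalar fields:  `‖Dᵐf‖²_{L²} = ∑_{|β| = m} ∑ᵢ ∫ |D^β fᵢ|²`. -/
def DmSq {n : ℕ} {ι : Type*} [Fintype ι] (m : ℕ) (f : ι → Spc n → ℝ) : ℝ :=
  ∑ β : Fin m → Fin n, ∑ i : ι, ∫ x : Spc n, (pdIter (List.ofFn β) (f i) x) ^ 2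

/-- `‖Dᵐf‖_{L²}`; for `m = 0` this is the usual `L²`-norm. -/
def DmNorm {n : ℕ} {ι : Type*} [Fintype ι] (m : ℕ) (f : ι → Spc n → ℝ) : ℝ :=
  Real.sqrt (DmSq m f)

/-- Partial derivative indexed by `Fin 3`; directions that do not exist in dimension
`n < 3` give zero. -/
def pd3 {n : ℕ} (i : Fin 3) (f : Spc n → ℝ) (x : Spc n) : ℝ :=
  if h : (i : ℕ) < n then pd ⟨i, h⟩ f x else 0

/-- The velocity field viewed as a 3-component field (missing components are zero). -/
def vel3 {n : ℕ} (u : Spc n → Spc n) (j : Fin 3) (x : Spc n) : ℝ :=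
  if h : (j : ℕ) < n then u x ⟨j, h⟩ else 0

/-- Curl `∇∧f` of a 3-component field on `Spc n`. -/
def curl3 {n : ℕ} (f : Spc n → Fin 3 → ℝ) (x : Spc n) : Fin 3 → ℝ :=
  ![pd3 1 (fun y => f y 2) x - pd3 2 (fun y => f y 1) x,
    pd3 2 (fun y => f y 0) x - pd3 0 (fun y => f y 2) x,
    pd3 0 (fun y => f y 1) x - pd3 1 (fun y => f y 0) x]

/-- Component of the curl of a 3-component field in a velocity direction `j : Fin n`. -/
def curlAt {n : ℕ} (f : Spc n → Fin 3 → ℝ) (j : Fin n) (x : Spc n) : ℝ :=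
  if h : (j : ℕ) < 3 then curl3 f x ⟨j, h⟩ else 0

/-- Divergence `∇·f` of a 3-component field on `Spc n`. -/
def div3 {n : ℕ} (f : Spc n → Fin 3 → ℝ) (x : Spc n) : ℝ :=
  ∑ k : Fin 3, pd3 k (fun y => f y k) x

/-- Spatial Laplacian of a scalar field. -/
def lap {n : ℕ} (f : Spc n → ℝ) (x : Spc n) : ℝ :=
  ∑ i : Fin n, pd i (pd i f) x

/-- A (global) Leray solution of the incompressible micropolar equations on `ℝⁿ`
(`n = 2` or `3`) with kinematic viscosity `μ`, angular viscosity `ν`, vortex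
(micro-rotation) viscosity `χ` and gyroviscosity `κ`:

  uₜ + (u·∇)u + ∇p = (μ+χ)Δu + 2χ∇∧w,  ∇·u = 0,
  wₜ + (u·∇)w = νΔw + κ∇(∇·w) − 4χw + 2χ∇∧u,

with initial data (u₀,w₀) = (u(·,0), w(·,0)) ∈ L²_σ(ℝⁿ)×L²(ℝⁿ): a global weak
solution, weakly continuous in `L²`, satisfying the equations in the weak sense on
`(0,∞)×ℝⁿ` together with the Leray energy inequality (for `s = 0` and for a.e.
`s > 0`), and which is smooth, with all spatial `L²`-derivatives, and a classical
solution after its regularity time `t⋆` (in dimension 2 one may take `t⋆ = 0`). -/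
structure LeraySolution (n : ℕ) (μ ν χ κ : ℝ) : Type where
  /-- the velocity field -/
  u : ℝ → Spc n → Spc n
  /-- the micro-rotation field (in dimension 2, of the form (0,0,w)) -/
  w : ℝ → Spc n → Spc 3
  /-- the pressure -/
  p : ℝ → Spc n → ℝ
  dim : n = 2 ∨ n = 3
  μ_pos : 0 < μ
  ν_pos : 0 < ν
  χ_pos : 0 < χ
  κ_nonneg : 0 ≤ κ
  /-- in dimension 2 the micro-rotation is the scalar third component -/
  planar : n = 2 → ∀ t x, w t x 0 = 0 ∧ w t x 1 = 0
  /-- `u(·,t) ∈ L²(ℝⁿ)` for all `t ≥ 0` -/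
  u_L2 : ∀ t, 0 ≤ t → MemLp (u t) 2 (volume : Measure (Spc n))
  /-- `w(·,t) ∈ L²(ℝⁿ)` for all `t ≥ 0` -/
  w_L2 : ∀ t, 0 ≤ t → MemLp (w t) 2 (volume : Measure (Spc n))
  /-- weak `L²`-continuity of `u` on `[0,∞)` -/
  weak_cont_u : ∀ φ : Spc n → Spc n, MemLp φ 2 (volume : Measure (Spc n)) →
    ContinuousOn (fun t => ∫ x, ⟪u t x, φ x⟫) (Set.Ici 0)
  /-- weak `L²`-continuity of `w` on `[0,∞)` -/
  weak_cont_w : ∀ ψ : Spc n → Spc 3, MemLp ψ 2 (volume : Measure (Spc n)) →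
    ContinuousOn (fun t => ∫ x, ⟪w t x, ψ x⟫) (Set.Ici 0)
  /-- `u(·,t)` is (weakly) divergence free for every `t ≥ 0` -/
  div_free_weak : ∀ t, 0 ≤ t → ∀ φ : Spc n → ℝ,
    ContDiff ℝ (⊤ : ℕ∞) φ → HasCompactSupport φ →
    ∫ x, ⟪u t x, gradient φ x⟫ = 0
  /-- the momentum equation, in the weak sense on `(0,∞)×ℝⁿ` -/
  weak_momentum : ∀ φ : ℝ → Spc n → Spc n,
    ContDiff ℝ (⊤ : ℕ∞) (fun q : ℝ × Spc n => φ q.1 q.2) →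
    HasCompactSupport (fun q : ℝ × Spc n => φ q.1 q.2) →
    (∀ t x, t ≤ 0 → φ t x = 0) →
    (∀ t x, (∑ i : Fin n, pd i (fun y => φ t y i) x) = 0) →
    (∫ t in Set.Ioi (0 : ℝ), ∫ x,
      ((∑ j : Fin n, u t x j * deriv (fun s => φ s x j) t)
        + (∑ i : Fin n, ∑ j : Fin n, u t x i * u t x j * pd i (fun y => φ t y j) x)
        + (μ + χ) * (∑ j : Fin n, u t x j * lap (fun y => φ t y j) x)
        + 2 * χ * (∑ k : Fin 3, w t x k * curl3 (fun y l => vel3 (φ t) l y) x k))) = 0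
  /-- the micro-rotation equation, in the weak sense on `(0,∞)×ℝⁿ` -/
  weak_spin : ∀ ψ : ℝ → Spc n → Spc 3,
    ContDiff ℝ (⊤ : ℕ∞) (fun q : ℝ × Spc n => ψ q.1 q.2) →
    HasCompactSupport (fun q : ℝ × Spc n => ψ q.1 q.2) →
    (∀ t x, t ≤ 0 → ψ t x = 0) →
    (∫ t in Set.Ioi (0 : ℝ), ∫ x,
      ((∑ k : Fin 3, w t x k * deriv (fun s => ψ s x k) t)
        + (∑ i : Fin n, ∑ k : Fin 3, u t x i * w t x k * pd i (fun y => ψ t y k) x)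
        + ν * (∑ k : Fin 3, w t x k * lap (fun y => ψ t y k) x)
        + κ * (∑ k : Fin 3, w t x k * pd3 k (div3 (fun y l => ψ t y l)) x)
        - 4 * χ * (∑ k : Fin 3, w t x k * ψ t x k)
        + 2 * χ * (∑ j : Fin n, u t x j * curlAt (fun y l => ψ t y l) j x))) = 0
  /-- a full-measure set of "good" times `s > 0` at which the energy inequality holds -/
  goodTimes : Set ℝ
  goodTimes_ae : ∀ᵐ s ∂((volume : Measure ℝ).restrict (Set.Ioi (0 : ℝ))), s ∈ goodTimes
  /-- the Leray energy inequality, for `s = 0` and for a.e. `s > 0` -/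
  energy : ∀ s : ℝ, (s = 0 ∨ (0 < s ∧ s ∈ goodTimes)) → ∀ t, s < t →
    DmSq 0 (Sum.elim (fun (i : Fin n) x => u t x i) (fun (k : Fin 3) x => w t x k))
      + 2 * ∫ τ in Set.Ioc s t,
          (μ * DmSq 1 (fun (i : Fin n) x => u τ x i)
            + ν * DmSq 1 (fun (k : Fin 3) x => w τ x k))
    ≤ DmSq 0 (Sum.elim (fun (i : Fin n) x => u s x i) (fun (k : Fin 3) x => w s x k))
  /-- the regularity time `t⋆` of the solution -/
  tstar : ℝ
  tstar_nonneg : 0 ≤ tstar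
  /-- the solution is smooth for `t > t⋆` -/
  smooth : ContDiffOn ℝ (⊤ : ℕ∞) (fun q : ℝ × Spc n => (u q.1 q.2, w q.1 q.2))
    {q : ℝ × Spc n | tstar < q.1}
  /-- all spatial derivatives are square-integrable for `t > t⋆` -/
  deriv_L2 : ∀ t, tstar < t → ∀ (m : ℕ) (β : Fin m → Fin n),
    (∀ i : Fin n, MemLp (pdIter (List.ofFn β) (fun x => u t x i)) 2 (volume : Measure (Spc n)))
    ∧ (∀ k : Fin 3, MemLp (pdIter (List.ofFn β) (fun x => w t x k)) 2 (volume : Measure (Spc n)))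
  /-- incompressibility, classically for `t > t⋆` -/
  div_free : ∀ t, tstar < t → ∀ x,
    (∑ i : Fin n, pd i (fun y => u t y i) x) = 0
  /-- the momentum equation, classically for `t > t⋆` -/
  momentum : ∀ t, tstar < t → ∀ x, ∀ j : Fin n,
    deriv (fun s => u s x j) t
      + (∑ i : Fin n, u t x i * pd i (fun y => u t y j) x)
      + pd j (p t) x
    = (μ + χ) * lap (fun y => u t y j) x
      + 2 * χ * curlAt (fun y k => w t y k) j x
  /-- the micro-rotation equation, classically for `t > t⋆` -/
  spin : ∀ t, tstar < t → ∀ x, ∀ k : Fin 3,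
    deriv (fun s => w s x k) t
      + (∑ i : Fin n, u t x i * pd i (fun y => w t y k) x)
    = ν * lap (fun y => w t y k) x
      + κ * pd3 k (div3 (fun y l => w t y l)) x
      - 4 * χ * w t x k
      + 2 * χ * curl3 (fun y j => vel3 (u t) j y) x k

namespace LeraySolution

variable {n : ℕ} {μ ν χ κ : ℝ}

/-- `‖Dᵐu(·,t)‖_{L²(ℝⁿ)}`. -/
def uNorm (S : LeraySolution n μ ν χ κ) (m : ℕ) (t : ℝ) : ℝ :=
  DmNorm m (fun (i : Fin n) x => S.u t x i)

/-- `‖Dᵐw(·,t)‖_{L²(ℝⁿ)}`. -/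
def wNorm (S : LeraySolution n μ ν χ κ) (m : ℕ) (t : ℝ) : ℝ :=
  DmNorm m (fun (k : Fin 3) x => S.w t x k)

/-- `‖Dᵐz(·,t)‖_{L²(ℝⁿ)}` for the pair `z = (u,w)`. -/
def zNorm (S : LeraySolution n μ ν χ κ) (m : ℕ) (t : ℝ) : ℝ :=
  DmNorm m (Sum.elim (fun (i : Fin n) x => S.u t x i) (fun (k : Fin 3) x => S.w t x k))

/-- `‖z₀‖_{L²(ℝⁿ)} = ‖(u₀,w₀)‖_{L²(ℝⁿ)}`. -/
def z0Norm (S : LeraySolution n μ ν χ κ) : ℝ := S.zNorm 0 0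

/-- `ε(·,t) = w(·,t) − ½ ∇∧u(·,t)` (in dimension 2 only the third component is
nonzero and equals the scalar `w − ½(D₁u₂ − D₂u₁)`). -/
def eps (S : LeraySolution n μ ν χ κ) (t : ℝ) : Fin 3 → Spc n → ℝ :=
  fun k x => S.w t x k - (1 / 2) * curl3 (fun y j => vel3 (S.u t) j y) x k

/-- `‖Dᵐε(·,t)‖_{L²(ℝⁿ)}`. -/
def epsNorm (S : LeraySolution n μ ν χ κ) (m : ℕ) (t : ℝ) : ℝ :=
  DmNorm m (S.eps t)

/-- Condition (1.8): `‖u(·,t)‖_{L²} ≤ C₀‖z₀‖_{L²} t^{−α}` for all `t > T₀`. -/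
def UpperBound (S : LeraySolution n μ ν χ κ) (C₀ α T₀ : ℝ) : Prop :=
  ∀ t, T₀ < t → S.uNorm 0 t ≤ C₀ * S.z0Norm * t ^ (-α)

/-- Conditions (1.11)/(1.14): `‖u(·,t)‖_{L²} ≥ c₀‖z₀‖_{L²} t^{−η}` for all `t > t₀`. -/
def LowerBound (S : LeraySolution n μ ν χ κ) (c₀ η t₀ : ℝ) : Prop :=
  ∀ t, t₀ < t → c₀ * S.z0Norm * t ^ (-η) ≤ S.uNorm 0 t

end LeraySolution

end Micropolar

namespace Micropolar

lemma DmSq_nonneg {n : ℕ} {ι : Type*} [Fintype ι] (m : ℕ) (f : ι → Spc n → ℝ) :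
    0 ≤ DmSq m f :=
  Finset.sum_nonneg fun _ _ => Finset.sum_nonneg fun _ _ =>
    MeasureTheory.integral_nonneg fun _ => sq_nonneg _

lemma DmSq_sumElim {n : ℕ} {ι κ' : Type*} [Fintype ι] [Fintype κ'] (m : ℕ)
    (f : ι → Spc n → ℝ) (g : κ' → Spc n → ℝ) :
    DmSq m (Sum.elim f g) = DmSq m f + DmSq m g := by
  unfold DmSq
  rw [← Finset.sum_add_distrib]
  exact Finset.sum_congr rfl fun β _ => by rw [Fintype.sum_sum_type]; rfl

/-- A measurable representative (for `τ > a`) of `τ ↦ ∫ (∂ᵢ W(τ,·))²`. -/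
lemma exists_meas_pd_sq {n : ℕ} (a : ℝ) (W : ℝ × Spc n → ℝ)
    (hW : ∀ q : ℝ × Spc n, a < q.1 → DifferentiableAt ℝ W q) (i : Fin n) :
    ∃ Φ : ℝ → ℝ, Measurable Φ ∧
      ∀ τ, a < τ → Φ τ = ∫ x : Spc n, (pd i (fun y => W (τ, y)) x) ^ 2 := by
  classical
  set v : ℝ × Spc n := ((0 : ℝ), EuclideanSpace.single i 1) with hv
  set G : ℝ × Spc n → ℝ :=
    Set.indicator {q : ℝ × Spc n | a < q.1} (fun q => (fderiv ℝ W q v) ^ 2) with hG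
  have hGmeas : Measurable G := by
    apply Measurable.indicator
    · exact (measurable_fderiv_apply_const ℝ W v).pow_const 2
    · exact measurableSet_lt measurable_const measurable_fst
  refine ⟨fun τ => ∫ x : Spc n, G (τ, x), ?_, ?_⟩
  · exact hGmeas.stronglyMeasurable.integral_prod_right'.measurable
  · intro τ hτ
    refine MeasureTheory.integral_congr_ae (Filter.Eventually.of_forall fun x => ?_)
    have hm : ((τ, x) : ℝ × Spc n) ∈ {q : ℝ × Spc n | a < q.1} := hτ
    simp only [hG, Set.indicator_of_mem hm]
    have hc : HasFDerivAt (fun y : Spc n => ((τ, y) : ℝ × Spc n))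
        (ContinuousLinearMap.inr ℝ ℝ (Spc n)) x := hasFDerivAt_prodMk_right τ x
    have h := ((hW (τ, x) hτ).hasFDerivAt).comp x hc
    have hfd : fderiv ℝ (fun y : Spc n => W (τ, y)) x
        = (fderiv ℝ W (τ, x)).comp (ContinuousLinearMap.inr ℝ ℝ (Spc n)) := h.fderiv
    simp only [pd, hfd, ContinuousLinearMap.comp_apply, ContinuousLinearMap.inr_apply, hv]

/-- A measurable representative (for `τ > a`) of `τ ↦ ‖DW(τ,·)‖²`. -/
lemma exists_meas_DmSq {n m : ℕ} (a : ℝ) (W : Fin m → ℝ × Spc n → ℝ)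
    (hW : ∀ k, ∀ q : ℝ × Spc n, a < q.1 → DifferentiableAt ℝ (W k) q) :
    ∃ Φ : ℝ → ℝ, Measurable Φ ∧
      ∀ τ, a < τ → Φ τ = DmSq 1 (fun (k : Fin m) x => W k (τ, x)) := by
  choose Φ hΦm hΦe using fun (k : Fin m) (i : Fin n) => exists_meas_pd_sq a (W k) (hW k) i
  refine ⟨fun τ => ∑ β : Fin 1 → Fin n, ∑ k : Fin m, Φ k (β 0) τ, ?_, ?_⟩
  · exact Finset.measurable_sum _ fun β _ => Finset.measurable_sum _ fun k _ => hΦm k (β 0)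
  · intro τ hτ
    unfold DmSq
    refine Finset.sum_congr rfl fun β _ => Finset.sum_congr rfl fun k _ => ?_
    rw [hΦe k (β 0) τ hτ]
    simp [List.ofFn_succ, pdIter]

/-- **Theorem 2.2.**  For any Leray solution `z = (u,w)` of the incompressible
micropolar equations on `ℝⁿ` (`n = 2` or `3`), one has
`‖Dz(·,t)‖_{L²(ℝⁿ)} ≤ γ^{−1/2} ‖(u₀,w₀)‖_{L²(ℝⁿ)} t^{−1/2}` for all `t > 2t⁎⁎`,
where `t⁎⁎ ≥ t⋆` is the monotonicity time of `‖Dz(·,t)‖_{L²(ℝⁿ)}` (a time after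
which `‖Dz(·,t)‖_{L²}` is monotonically decreasing, with
`t⁎⁎ ≤ 0.005·γ⁻⁵‖(u₀,w₀)‖⁴_{L²}` when `n = 3`, and
`‖(u,w)(·,t⁎⁎)‖_{L²(ℝ²)} ≤ 2γ` when `n = 2`); here `γ = min{μ,ν}`. -/
theorem theorem22 {n : ℕ} (μ ν χ κ : ℝ) (S : LeraySolution n μ ν χ κ) (tss : ℝ)
    (h₁ : S.tstar ≤ tss)
    (h₂ : AntitoneOn (S.zNorm 1) (Set.Ioi tss))
    (h₃ : n = 3 → tss ≤ 0.005 * S.z0Norm ^ 4 / (min μ ν) ^ 5)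
    (h₄ : n = 2 → S.zNorm 0 tss ≤ 2 * min μ ν) :
    ∀ t, 2 * tss < t →
      S.zNorm 1 t ≤ (min μ ν) ^ (-(1 : ℝ) / 2) * S.z0Norm * t ^ (-(1 : ℝ) / 2) := by
  intro t ht
  set γ := min μ ν with hγdef
  have hγpos : 0 < γ := lt_min S.μ_pos S.ν_pos
  have htss0 : 0 ≤ tss := le_trans S.tstar_nonneg h₁
  have ht0 : 0 < t := by nlinarith
  have hAnn : ∀ τ : ℝ, 0 ≤ DmSq 1 (fun (i : Fin n) x => S.u τ x i) :=
    fun τ => DmSq_nonneg _ _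
  have hBnn : ∀ τ : ℝ, 0 ≤ DmSq 1 (fun (k : Fin 3) x => S.w τ x k) :=
    fun τ => DmSq_nonneg _ _
  have hsplit : ∀ τ : ℝ,
      DmSq 1 (Sum.elim (fun (i : Fin n) x => S.u τ x i) (fun (k : Fin 3) x => S.w τ x k))
        = DmSq 1 (fun (i : Fin n) x => S.u τ x i) + DmSq 1 (fun (k : Fin 3) x => S.w τ x k) :=
    fun τ => DmSq_sumElim _ _ _
  have hzsq : ∀ τ : ℝ, S.zNorm 1 τ ^ 2
      = DmSq 1 (Sum.elim (fun (i : Fin n) x => S.u τ x i) (fun (k : Fin 3) x => S.w τ x k)) :=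
    fun τ => Real.sq_sqrt (DmSq_nonneg _ _)
  have hznn : ∀ τ : ℝ, 0 ≤ S.zNorm 1 τ := fun τ => Real.sqrt_nonneg _
  have hganti : ∀ a b : ℝ, tss < a → a ≤ b → S.zNorm 1 b ^ 2 ≤ S.zNorm 1 a ^ 2 := by
    intro a b ha hab
    have := h₂ (Set.mem_Ioi.mpr ha) (Set.mem_Ioi.mpr (lt_of_lt_of_le ha hab)) hab
    exact pow_le_pow_left₀ (hznn b) this 2
  -- choose a good time s ∈ (tss, t/2)
  obtain ⟨s, hs1, hs2, hsgood⟩ : ∃ s, tss < s ∧ s < t / 2 ∧ s ∈ S.goodTimes := by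
    by_contra hcon
    push_neg at hcon
    have hsub : Set.Ioo tss (t / 2) ⊆ {s : ℝ | s ∉ S.goodTimes} :=
      fun s hs => hcon s hs.1 hs.2
    have h1 : (volume.restrict (Set.Ioi (0 : ℝ))) {s : ℝ | ¬ s ∈ S.goodTimes} = 0 :=
      MeasureTheory.ae_iff.mp S.goodTimes_ae
    have h2 : (volume.restrict (Set.Ioi (0 : ℝ))) (Set.Ioo tss (t / 2)) = 0 :=
      measure_mono_null hsub h1
    rw [MeasureTheory.Measure.restrict_apply measurableSet_Ioo] at h2
    have hss : Set.Ioo tss (t / 2) ∩ Set.Ioi (0 : ℝ) = Set.Ioo tss (t / 2) :=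
      Set.inter_eq_self_of_subset_left fun x hx => lt_of_le_of_lt htss0 hx.1
    rw [hss, Real.volume_Ioo] at h2
    have hne : ¬ (0 : ℝ) < t / 2 - tss := fun hpos => (ENNReal.ofReal_pos.mpr hpos).ne' h2
    have : tss < t / 2 := by linarith
    exact hne (by linarith)
  have hst : s < t := by linarith
  have hs0 : 0 < s := lt_of_le_of_lt htss0 hs1
  -- the two energy inequalities
  have e1 := S.energy 0 (Or.inl rfl) s hs0
  have e2 := S.energy s (Or.inr ⟨hs0, hsgood⟩) t hst
  have hI1 : 0 ≤ ∫ τ in Set.Ioc (0 : ℝ) s,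
      (μ * DmSq 1 (fun (i : Fin n) x => S.u τ x i)
        + ν * DmSq 1 (fun (k : Fin 3) x => S.w τ x k)) :=
    MeasureTheory.integral_nonneg fun τ =>
      add_nonneg (mul_nonneg S.μ_pos.le (hAnn τ)) (mul_nonneg S.ν_pos.le (hBnn τ))
  -- measurable representatives of the dissipation terms
  have hopen : IsOpen {q : ℝ × Spc n | S.tstar < q.1} := isOpen_Ioi.preimage continuous_fst
  have hdiffZ : ∀ q : ℝ × Spc n, S.tstar < q.1 →
      DifferentiableAt ℝ (fun q : ℝ × Spc n => (S.u q.1 q.2, S.w q.1 q.2)) q := fun q hq =>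
    (S.smooth.differentiableOn (by simp)).differentiableAt (hopen.mem_nhds hq)
  have hdiffU : ∀ (j : Fin n), ∀ q : ℝ × Spc n, S.tstar < q.1 →
      DifferentiableAt ℝ (fun q : ℝ × Spc n => S.u q.1 q.2 j) q := by
    intro j q hq
    have hL : DifferentiableAt ℝ (fun p : Spc n × Spc 3 => p.1 j)
        ((fun q : ℝ × Spc n => (S.u q.1 q.2, S.w q.1 q.2)) q) :=
      ((EuclideanSpace.proj j).comp (ContinuousLinearMap.fst ℝ (Spc n) (Spc 3))).differentiableAt
    exact hL.comp q (hdiffZ q hq)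
  have hdiffW : ∀ (k : Fin 3), ∀ q : ℝ × Spc n, S.tstar < q.1 →
      DifferentiableAt ℝ (fun q : ℝ × Spc n => S.w q.1 q.2 k) q := by
    intro k q hq
    have hL : DifferentiableAt ℝ (fun p : Spc n × Spc 3 => p.2 k)
        ((fun q : ℝ × Spc n => (S.u q.1 q.2, S.w q.1 q.2)) q) :=
      ((EuclideanSpace.proj k).comp (ContinuousLinearMap.snd ℝ (Spc n) (Spc 3))).differentiableAt
    exact hL.comp q (hdiffZ q hq)
  obtain ⟨ΦA, hΦAm, hΦAe⟩ :=
    exists_meas_DmSq S.tstar (fun (j : Fin n) (q : ℝ × Spc n) => S.u q.1 q.2 j) hdiffU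
  obtain ⟨ΦB, hΦBm, hΦBe⟩ :=
    exists_meas_DmSq S.tstar (fun (k : Fin 3) (q : ℝ × Spc n) => S.w q.1 q.2 k) hdiffW
  have htstar : ∀ τ ∈ Set.Ioc s t, S.tstar < τ :=
    fun τ hτ => lt_of_le_of_lt h₁ (lt_trans hs1 hτ.1)
  -- integrability of the dissipation on (s, t]
  have hFmeas : MeasureTheory.AEStronglyMeasurable
      (fun τ => μ * DmSq 1 (fun (i : Fin n) x => S.u τ x i)
        + ν * DmSq 1 (fun (k : Fin 3) x => S.w τ x k))
      (volume.restrict (Set.Ioc s t)) := by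
    refine (((hΦAm.const_mul μ).add (hΦBm.const_mul ν)).aestronglyMeasurable).congr ?_
    refine MeasureTheory.ae_restrict_of_forall_mem measurableSet_Ioc fun τ hτ => ?_
    simp only
    show μ * ΦA τ + ν * ΦB τ = _; rw [hΦAe τ (htstar τ hτ), hΦBe τ (htstar τ hτ)]
  have hFbound : ∀ τ ∈ Set.Ioc s t,
      ‖μ * DmSq 1 (fun (i : Fin n) x => S.u τ x i)
        + ν * DmSq 1 (fun (k : Fin 3) x => S.w τ x k)‖ ≤ (max μ ν) * S.zNorm 1 s ^ 2 := by
    intro τ hτ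
    have h1 : S.zNorm 1 τ ^ 2 ≤ S.zNorm 1 s ^ 2 := hganti s τ hs1 hτ.1.le
    rw [hzsq τ, hsplit τ] at h1
    have hμ : μ ≤ max μ ν := le_max_left μ ν
    have hν : ν ≤ max μ ν := le_max_right μ ν
    have hmaxnn : (0 : ℝ) ≤ max μ ν := le_trans S.μ_pos.le hμ
    rw [Real.norm_eq_abs, abs_of_nonneg (add_nonneg (mul_nonneg S.μ_pos.le (hAnn τ))
      (mul_nonneg S.ν_pos.le (hBnn τ)))]
    nlinarith [mul_le_mul_of_nonneg_left h1 hmaxnn, hAnn τ, hBnn τ]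
  have hFint : MeasureTheory.IntegrableOn
      (fun τ => μ * DmSq 1 (fun (i : Fin n) x => S.u τ x i)
        + ν * DmSq 1 (fun (k : Fin 3) x => S.w τ x k)) (Set.Ioc s t) volume := by
    refine MeasureTheory.Integrable.mono' (g := fun _ : ℝ => (max μ ν) * S.zNorm 1 s ^ 2)
      (MeasureTheory.integrableOn_const measure_Ioc_lt_top.ne) hFmeas ?_
    exact MeasureTheory.ae_restrict_of_forall_mem measurableSet_Ioc hFbound
  -- the key lower bound for the dissipation integral
  have hpt : ∀ τ ∈ Set.Ioc s t, (fun _ : ℝ => γ * S.zNorm 1 t ^ 2) τ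
      ≤ (fun τ => μ * DmSq 1 (fun (i : Fin n) x => S.u τ x i)
        + ν * DmSq 1 (fun (k : Fin 3) x => S.w τ x k)) τ := by
    intro τ hτ
    simp only
    have h1 : S.zNorm 1 t ^ 2 ≤ S.zNorm 1 τ ^ 2 := hganti τ t (lt_trans hs1 hτ.1) hτ.2
    have h2 : γ * S.zNorm 1 τ ^ 2 ≤ μ * DmSq 1 (fun (i : Fin n) x => S.u τ x i)
        + ν * DmSq 1 (fun (k : Fin 3) x => S.w τ x k) := by
      rw [hzsq τ, hsplit τ]
      have hγμ : γ ≤ μ := min_le_left μ ν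
      have hγν : γ ≤ ν := min_le_right μ ν
      nlinarith [hAnn τ, hBnn τ]
    nlinarith [mul_le_mul_of_nonneg_left h1 hγpos.le]
  have hconst : MeasureTheory.IntegrableOn (fun _ : ℝ => γ * S.zNorm 1 t ^ 2)
      (Set.Ioc s t) volume :=
    MeasureTheory.integrableOn_const measure_Ioc_lt_top.ne
  have hkey : (t - s) * (γ * S.zNorm 1 t ^ 2) ≤ ∫ τ in Set.Ioc s t,
      (μ * DmSq 1 (fun (i : Fin n) x => S.u τ x i)
        + ν * DmSq 1 (fun (k : Fin 3) x => S.w τ x k)) := by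
    calc (t - s) * (γ * S.zNorm 1 t ^ 2)
        = ∫ _ in Set.Ioc s t, (γ * S.zNorm 1 t ^ 2) := by
          rw [MeasureTheory.setIntegral_const, Real.volume_real_Ioc_of_le hst.le,
            smul_eq_mul]
      _ ≤ _ := MeasureTheory.setIntegral_mono_on hconst hFint measurableSet_Ioc hpt
  -- assemble
  have hz0sq : S.z0Norm ^ 2
      = DmSq 0 (Sum.elim (fun (i : Fin n) x => S.u 0 x i) (fun (k : Fin 3) x => S.w 0 x k)) :=
    Real.sq_sqrt (DmSq_nonneg _ _)
  have hD0t : 0 ≤ DmSq 0 (Sum.elim (fun (i : Fin n) x => S.u t x i)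
      (fun (k : Fin 3) x => S.w t x k)) := DmSq_nonneg _ _
  have hmain : γ * S.zNorm 1 t ^ 2 * t ≤ S.z0Norm ^ 2 := by
    have hts2 : t / 2 ≤ t - s := by linarith
    have hznn2 : 0 ≤ γ * S.zNorm 1 t ^ 2 := mul_nonneg hγpos.le (sq_nonneg _)
    rw [hz0sq]
    nlinarith [mul_le_mul_of_nonneg_left hts2 hznn2, hkey, e1, e2, hI1, hD0t]
  have hz0nn : 0 ≤ S.z0Norm := Real.sqrt_nonneg _
  have hle : S.zNorm 1 t ^ 2 ≤ S.z0Norm ^ 2 / (γ * t) := by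
    rw [le_div_iff₀ (by positivity)]
    nlinarith [hmain]
  have hsγ : Real.sqrt γ ≠ 0 := ne_of_gt (Real.sqrt_pos.mpr hγpos)
  have hsτ : Real.sqrt t ≠ 0 := ne_of_gt (Real.sqrt_pos.mpr ht0)
  calc S.zNorm 1 t = Real.sqrt (S.zNorm 1 t ^ 2) := (Real.sqrt_sq (hznn t)).symm
    _ ≤ Real.sqrt (S.z0Norm ^ 2 / (γ * t)) := Real.sqrt_le_sqrt hle
    _ = γ ^ (-(1 : ℝ) / 2) * S.z0Norm * t ^ (-(1 : ℝ) / 2) := by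
        rw [Real.sqrt_div (sq_nonneg _), Real.sqrt_sq hz0nn, Real.sqrt_mul hγpos.le,
          show (-(1 : ℝ) / 2) = -(1 / 2 : ℝ) by norm_num,
          Real.rpow_neg hγpos.le, Real.rpow_neg ht0.le,
          ← Real.sqrt_eq_rpow, ← Real.sqrt_eq_rpow]
        field_simp

end Micropolar
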